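/- arXiv:2208.08095 — 6 statements merged into one kernel-verified Lean document; each statement's English description precedes it below -/
import Mathlib

section
/- Let G be a connected graph with finite diameter, let W be a strong resolving set of G, and let u, v be distinct vertices of G such that N(u) = N(v) or N[u] = N[v]. Then u ∈ W or v ∈ W. -/
/-! Common definitions: metric/strong-metric dimension, strong resolving graph,
independence number, and the co-maximal ideal graph of a commutative ring. -/

namespace CoMax

variable {V : Type*}

/-- `S` is a resolving set for `G`: the metric representations with respect to `S`
of vertices outside `S` are pairwise distinct. -/
def IsResolvingSet (G : SimpleGraph V) (S : Set V) : Prop :=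
  ∀ u v : V, u ∉ S → v ∉ S → (∀ w ∈ S, G.dist u w = G.dist v w) → u = v

/-- The metric dimension of `G`: the smallest cardinality of a resolving set. -/
noncomputable def metricDim (G : SimpleGraph V) : Cardinal :=
  ⨅ S : {S : Set V // IsResolvingSet G S}, Cardinal.mk ↥(S.1)

/-- `w` strongly resolves `u` and `v`: there is a shortest path from `u` to `w`
containing `v`, or a shortest path from `v` to `w` containing `u`. -/
def StronglyResolves (G : SimpleGraph V) (w u v : V) : Prop :=
  G.dist u v + G.dist v w = G.dist u w ∨ G.dist v u + G.dist u w = G.dist v w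

/-- `S` is a strong resolving set for `G`: every pair of distinct vertices is
strongly resolved by some vertex of `S`. -/
def IsStrongResolvingSet (G : SimpleGraph V) (S : Set V) : Prop :=
  ∀ u v : V, u ≠ v → ∃ w ∈ S, StronglyResolves G w u v

/-- The strong metric dimension of `G`: the smallest cardinality of a strong
resolving set. -/
noncomputable def sdim (G : SimpleGraph V) : Cardinal :=
  ⨅ S : {S : Set V // IsStrongResolvingSet G S}, Cardinal.mk ↥(S.1)

/-- `u` is maximally distant from `v`: `d(v,w) ≤ d(u,v)` for every neighbor `w` of `u`. -/
def MaximallyDistantFrom (G : SimpleGraph V) (u v : V) : Prop :=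
  ∀ w : V, G.Adj u w → G.dist v w ≤ G.dist u v

/-- `u` and `v` are mutually maximally distant. -/
def MutuallyMaximallyDistant (G : SimpleGraph V) (u v : V) : Prop :=
  MaximallyDistantFrom G u v ∧ MaximallyDistantFrom G v u

/-- The boundary `∂(G)` of `G`. -/
def boundarySet (G : SimpleGraph V) : Set V :=
  {u | ∃ v, v ≠ u ∧ MutuallyMaximallyDistant G u v}

/-- The strong resolving graph `G_SR` of `G`: vertices are the boundary vertices,
two of them being adjacent iff they are mutually maximally distant. -/
def srGraph (G : SimpleGraph V) : SimpleGraph ↥(boundarySet G) where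
  Adj u v := u ≠ v ∧ MutuallyMaximallyDistant G u.1 v.1
  symm := ⟨fun u v h => ⟨h.1.symm, h.2.2, h.2.1⟩⟩
  loopless := ⟨fun u h => h.1 rfl⟩

/-- The independence number `β(G)` of `G`. -/
noncomputable def indepNum (G : SimpleGraph V) : ℕ :=
  sSup {k | ∃ S : Set V,
    (∀ u ∈ S, ∀ v ∈ S, u ≠ v → ¬ G.Adj u v) ∧ S.Finite ∧ S.ncard = k}

/-- The vertices of the co-maximal ideal graph of `R`: proper ideals of `R`
not contained in the Jacobson radical of `R`. -/
def IsComaxVertex (R : Type*) [CommRing R] (I : Ideal R) : Prop :=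
  I ≠ ⊤ ∧ ¬ I ≤ Ideal.jacobson (⊥ : Ideal R)

/-- The co-maximal ideal graph `Γ(R)`: distinct vertices `I`, `J` are adjacent
iff `I + J = R`. -/
def comaxGraph (R : Type*) [CommRing R] :
    SimpleGraph {I : Ideal R // IsComaxVertex R I} where
  Adj I J := I ≠ J ∧ I.1 ⊔ J.1 = ⊤
  symm := ⟨fun I J h => ⟨h.1.symm, by rw [sup_comm]; exact h.2⟩⟩
  loopless := ⟨fun I h => h.1 rfl⟩

/-- The graph `Γ(R)**`: same vertices as `Γ(R)`, with distinct `I`, `J` adjacent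
iff `I + J ≠ R`, `I ⊄ J` and `J ⊄ I`. -/
def comaxDoubleStar (R : Type*) [CommRing R] :
    SimpleGraph {I : Ideal R // IsComaxVertex R I} where
  Adj I J := I ≠ J ∧ I.1 ⊔ J.1 ≠ ⊤ ∧ ¬ I.1 ≤ J.1 ∧ ¬ J.1 ≤ I.1
  symm := ⟨fun I J h => ⟨h.1.symm, by rw [sup_comm]; exact h.2.1, h.2.2.2, h.2.2.1⟩⟩
  loopless := ⟨fun I h => h.1 rfl⟩

/-- The ideal of a product ring `Π i, R i` whose members are the elements all of
whose components lie in the given family of ideals. -/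
def piIdeal {ι : Type*} {R : ι → Type*} [∀ i, CommRing (R i)]
    (I : ∀ i, Ideal (R i)) : Ideal (∀ i, R i) where
  carrier := {x | ∀ i, x i ∈ I i}
  add_mem' := fun ha hb i => add_mem (ha i) (hb i)
  zero_mem' := fun i => zero_mem _
  smul_mem' := fun c x hx i => (I i).smul_mem (c i) (hx i)

/-- The `i`-th component of an ideal of a product ring. -/
def comp {ι : Type*} {R : ι → Type*} [∀ i, CommRing (R i)]
    (K : Ideal (∀ i, R i)) (i : ι) : Ideal (R i) :=
  K.map (Pi.evalRingHom R i)

/-- The relation `I ∼ J`: for each `i`, the `i`-th component of `I` consists of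
nilpotents iff the `i`-th component of `J` does. `[I] = [J]` iff `I ∼ J`. -/
def simRel {ι : Type*} {R : ι → Type*} [∀ i, CommRing (R i)]
    (I J : Ideal (∀ i, R i)) : Prop :=
  ∀ i, comp I i ≤ nilradical (R i) ↔ comp J i ≤ nilradical (R i)

open Classical in
/-- The ideal `I′` obtained from `I` by replacing all of its nilpotent components by `0`. -/
noncomputable def primed {ι : Type*} {R : ι → Type*} [∀ i, CommRing (R i)]
    (K : Ideal (∀ i, R i)) : Ideal (∀ i, R i) :=
  piIdeal fun i => if comp K i ≤ nilradical (R i) then ⊥ else comp K i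


private lemma dist_le_aux {V : Type*} (G : SimpleGraph V) (hconn : G.Connected) {u v : V}
    (H : ∀ x, G.Adj u x → x = v ∨ G.Adj v x) {w : V} (hw : w ≠ u) :
    G.dist v w ≤ G.dist u w := by
  obtain ⟨p, hp⟩ := hconn.exists_walk_length_eq_dist u w
  cases p with
  | nil => exact absurd rfl hw.symm
  | @cons _ x _ hux q =>
    simp only [SimpleGraph.Walk.length_cons] at hp
    rcases H x hux with h | hvx
    · calc G.dist v w = G.dist x w := by rw [h]
        _ ≤ q.length := SimpleGraph.dist_le q
        _ ≤ q.length + 1 := Nat.le_succ _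
        _ = G.dist u w := hp
    · calc G.dist v w ≤ G.dist v x + G.dist x w := hconn.dist_triangle
        _ ≤ 1 + q.length := by
            gcongr
            · exact SimpleGraph.dist_le hvx.toWalk
            · exact SimpleGraph.dist_le q
        _ = G.dist u w := by omega

/-- In a connected graph `G` of finite diameter, if `W` is a strong
resolving set and `u ≠ v` satisfy `N(u) = N(v)` or `N[u] = N[v]`, then `u ∈ W` or `v ∈ W`. -/
theorem stmt_1 {V : Type*} (G : SimpleGraph V) (hconn : G.Connected)
    (hdiam : G.ediam ≠ ⊤) (W : Set V) (hW : IsStrongResolvingSet G W)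
    (u v : V) (huv : u ≠ v)
    (h : G.neighborSet u = G.neighborSet v ∨
      insert u (G.neighborSet u) = insert v (G.neighborSet v)) :
    u ∈ W ∨ v ∈ W := by
  by_contra hc
  push_neg at hc
  obtain ⟨hu, hv⟩ := hc
  obtain ⟨w, hwW, hsr⟩ := hW u v huv
  have hwu : w ≠ u := fun he => hu (he ▸ hwW)
  have hwv : w ≠ v := fun he => hv (he ▸ hwW)
  have H1 : ∀ x, G.Adj u x → x = v ∨ G.Adj v x := by
    intro x hx
    rcases h with h | h
    · exact Or.inr (show x ∈ G.neighborSet v from h ▸ hx)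
    · have hm : x ∈ insert v (G.neighborSet v) := h ▸ (Set.mem_insert_iff.mpr (Or.inr hx))
      exact Set.mem_insert_iff.mp hm
  have H2 : ∀ x, G.Adj v x → x = u ∨ G.Adj u x := by
    intro x hx
    rcases h with h | h
    · exact Or.inr (show x ∈ G.neighborSet u from h.symm ▸ hx)
    · have hm : x ∈ insert u (G.neighborSet u) := h.symm ▸ (Set.mem_insert_iff.mpr (Or.inr hx))
      exact Set.mem_insert_iff.mp hm
  have hd : G.dist u w = G.dist v w :=
    le_antisymm (dist_le_aux G hconn H2 hwv) (dist_le_aux G hconn H1 hwu)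
  have huv0 : G.dist u v ≠ 0 := fun h0 => huv ((hconn u v).dist_eq_zero_iff.mp h0)
  have hvu0 : G.dist v u ≠ 0 := fun h0 => huv (((hconn v u).dist_eq_zero_iff.mp h0).symm)
  rcases hsr with hs | hs <;> omega

end CoMax
end

section
/- Let R be a commutative ring with identity such that the co-maximal ideal graph Γ(R) is connected. Then the strong metric dimension sdim_M(Γ(R)) is finite if and only if Γ(R) has finitely many vertices. -/
/-! Common definitions: metric/strong-metric dimension, strong resolving graph,
independence number, and the co-maximal ideal graph of a commutative ring. -/

namespace CoMax

variable {V : Type*}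

/-! ### Auxiliary graph-theoretic lemmas -/

section GraphAux

variable {V : Type*} {G : SimpleGraph V}

/-- If `v` is maximally distant from `u` (i.e. `MaximallyDistantFrom G v u`) and
`v ≠ w`, then `v` cannot lie on a shortest `u`–`w` path. -/
lemma not_on_geodesic_aux (hc : G.Connected) {u v w : V}
    (hmd : MaximallyDistantFrom G v u) (hvw : v ≠ w)
    (h : G.dist u v + G.dist v w = G.dist u w) : False := by
  have h0 : G.dist v w ≠ 0 := (hc.pos_dist_of_ne hvw).ne'
  obtain ⟨p, hp⟩ := SimpleGraph.exists_walk_of_dist_ne_zero h0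
  cases p with
  | nil => simp at hp; omega
  | cons hadj q =>
    rename_i x
    have hq : q.length + 1 = G.dist v w := by
      simpa [SimpleGraph.Walk.length_cons] using hp
    have hxw : G.dist x w ≤ q.length := SimpleGraph.dist_le q
    have htri : G.dist u w ≤ G.dist u x + G.dist x w := hc.dist_triangle
    have hmax : G.dist u x ≤ G.dist v u := hmd x hadj
    have hcomm : G.dist v u = G.dist u v := SimpleGraph.dist_comm ..
    omega

/-- No vertex other than `u`, `v` strongly resolves a mutually maximally distant
pair `u`, `v`. -/
lemma mmd_not_stronglyResolves (hc : G.Connected) {u v w : V}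
    (hmmd : MutuallyMaximallyDistant G u v) (hu : w ≠ u) (hv : w ≠ v)
    (h : StronglyResolves G w u v) : False := by
  rcases h with h | h
  · exact not_on_geodesic_aux hc hmmd.2 hv.symm h
  · exact not_on_geodesic_aux hc hmmd.1 hu.symm h

/-- If `G` contains an infinite set of pairwise mutually maximally distant
vertices, then every strong resolving set of `G` is infinite. -/
lemma srs_infinite_of_infinite_mmd (hc : G.Connected) {T : Set V} (hT : T.Infinite)
    (hmmd : ∀ u ∈ T, ∀ v ∈ T, u ≠ v → MutuallyMaximallyDistant G u v)
    {S : Set V} (hS : IsStrongResolvingSet G S) : S.Infinite := by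
  by_contra hfin
  rw [Set.not_infinite] at hfin
  obtain ⟨u, hu, v, hv, huv⟩ := (hT.diff hfin).nontrivial
  obtain ⟨w, hw, hsr⟩ := hS u v huv
  exact mmd_not_stronglyResolves hc (hmmd u hu.1 v hv.1 huv)
    (fun h => hu.2 (h ▸ hw)) (fun h => hv.2 (h ▸ hw)) hsr

end GraphAux

/-! ### Auxiliary ring-theoretic lemmas -/

section RingAux

variable {R : Type*} [CommRing R]

/-- Krull's argument: if no maximal ideal contains both `I` and `J`, they are comaximal. -/
lemma sup_eq_top_of_forall_max {I J : Ideal R}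
    (h : ∀ Q : Ideal R, Q.IsMaximal → I ≤ Q → ¬ J ≤ Q) : I ⊔ J = ⊤ := by
  by_contra hne
  obtain ⟨Q, hQ, hle⟩ := Ideal.exists_le_maximal _ hne
  exact h Q hQ (le_trans le_sup_left hle) (le_trans le_sup_right hle)

lemma jacobson_bot_le_max {N : Ideal R} (hN : N.IsMaximal) :
    Ideal.jacobson (⊥ : Ideal R) ≤ N :=
  sInf_le ⟨bot_le, hN⟩

/-- A maximal ideal is a vertex of `Γ(R)` provided there is another maximal ideal. -/
lemma max_isVertex {M N : Ideal R} (hM : M.IsMaximal) (hN : N.IsMaximal)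
    (hMN : M ≠ N) : IsComaxVertex R M := by
  refine ⟨hM.ne_top, fun hle => ?_⟩
  exact hMN (hM.eq_of_le hN.ne_top (hle.trans (jacobson_bot_le_max hN)))

/-- If a maximal ideal `Q` contains `M ⊓ N` with `M`, `N` maximal,
then `Q = M` or `Q = N`. -/
lemma max_of_inf_le {M N Q : Ideal R} (hM : M.IsMaximal) (hN : N.IsMaximal)
    (hQ : Q.IsMaximal) (h : M ⊓ N ≤ Q) : Q = M ∨ Q = N := by
  rcases hQ.isPrime.mul_le.mp (le_trans Ideal.mul_le_inf h) with h' | h'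
  · exact Or.inl (hM.eq_of_le hQ.ne_top h').symm
  · exact Or.inr (hN.eq_of_le hQ.ne_top h').symm

/-- `M ⊓ N` is a vertex of `Γ(R)` provided there is a third maximal ideal. -/
lemma inf_isVertex {M N Q : Ideal R} (hM : M.IsMaximal) (hN : N.IsMaximal)
    (hQ : Q.IsMaximal) (hQM : Q ≠ M) (hQN : Q ≠ N) : IsComaxVertex R (M ⊓ N) := by
  constructor
  · intro h
    exact hM.ne_top (top_le_iff.mp (h ▸ inf_le_left))
  · intro hle
    rcases max_of_inf_le hM hN hQ (hle.trans (jacobson_bot_le_max hQ)) with h | h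
    · exact hQM h
    · exact hQN h

/-- Twins (vertices contained in exactly the same maximal ideals) are maximally
distant from one another. -/
lemma twin_mdf (hc : (comaxGraph R).Connected)
    {u v : {I : Ideal R // IsComaxVertex R I}} (huv : u ≠ v)
    (hσ : ∀ Q : Ideal R, Q.IsMaximal → (u.1 ≤ Q ↔ v.1 ≤ Q)) :
    MaximallyDistantFrom (comaxGraph R) u v := by
  intro w hw
  have hd : 1 ≤ (comaxGraph R).dist u v := hc.pos_dist_of_ne huv
  by_cases hwv : w = v
  · subst hwv
    rw [SimpleGraph.dist_self]
    omega
  · have hadj : (comaxGraph R).Adj v w := by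
      refine ⟨fun h => hwv (h.symm), sup_eq_top_of_forall_max fun Q hQ h1 h2 => ?_⟩
      have hu : u.1 ≤ Q := (hσ Q hQ).mpr h1
      exact hQ.ne_top (top_le_iff.mp (hw.2 ▸ sup_le hu h2))
    have := SimpleGraph.dist_le hadj.toWalk
    simp only [SimpleGraph.Walk.length_cons, SimpleGraph.Walk.length_nil] at this
    omega

/-- The key computation for the case of infinitely many maximal ideals:
`M ⊓ N` is maximally distant from `M ⊓ P` for distinct maximal ideals `M, N, P`. -/
lemma inf_mdf (hc : (comaxGraph R).Connected)
    {u v : {I : Ideal R // IsComaxVertex R I}} {M N P : Ideal R}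
    (hM : M.IsMaximal) (hN : N.IsMaximal) (hP : P.IsMaximal)
    (hNM : N ≠ M) (hPM : P ≠ M) (hNP : N ≠ P)
    (hu : u.1 = M ⊓ N) (hv : v.1 = M ⊓ P) :
    MaximallyDistantFrom (comaxGraph R) u v := by
  -- `u ≠ v`
  have huv : u ≠ v := by
    intro h
    have : M ⊓ N ≤ P := by rw [← hu, h, hv]; exact inf_le_right
    rcases max_of_inf_le hM hN hP this with h' | h'
    · exact hPM h'
    · exact hNP h'.symm
  -- `u` and `v` are not adjacent
  have hnadj : ¬ (comaxGraph R).Adj u v := by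
    rintro ⟨-, hsup⟩
    refine hM.ne_top (top_le_iff.mp ?_)
    rw [← hsup, hu, hv]
    exact sup_le inf_le_left inf_le_left
  have hd2 : 2 ≤ (comaxGraph R).dist u v := by
    have h1 : 0 < (comaxGraph R).dist u v := hc.pos_dist_of_ne huv
    have h2 : (comaxGraph R).dist u v ≠ 1 := by
      intro h
      exact hnadj (SimpleGraph.dist_eq_one_iff_adj.mp h)
    omega
  -- the maximal ideal `N` is a vertex
  have hNvx : IsComaxVertex R N := max_isVertex hN hM hNM
  set Nv : {I : Ideal R // IsComaxVertex R I} := ⟨N, hNvx⟩ with hNvdef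
  -- `v` is not contained in `N`, hence `v` is adjacent to `N`
  have hvN : ¬ v.1 ≤ N := by
    intro h
    rw [hv] at h
    rcases max_of_inf_le hM hP hN h with h' | h'
    · exact hNM h'
    · exact hNP h'
  have hadjvN : (comaxGraph R).Adj v Nv := by
    constructor
    · intro h
      exact hvN (by rw [h])
    · refine sup_eq_top_of_forall_max fun Q hQ h1 h2 => ?_
      have : Q = N := (hN.eq_of_le hQ.ne_top h2).symm
      exact hvN (this ▸ h1)
  -- main argument
  intro w hw
  by_cases hwN : w = Nv
  · subst hwN
    have := SimpleGraph.dist_le hadjvN.toWalk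
    simp only [SimpleGraph.Walk.length_cons, SimpleGraph.Walk.length_nil] at this
    omega
  · have hadjNw : (comaxGraph R).Adj Nv w := by
      refine ⟨fun h => hwN h.symm, sup_eq_top_of_forall_max fun Q hQ h1 h2 => ?_⟩
      have hQN : Q = N := (hN.eq_of_le hQ.ne_top h1).symm
      have huQ : u.1 ≤ Q := by rw [hQN, hu]; exact inf_le_right
      exact hQ.ne_top (top_le_iff.mp (hw.2 ▸ sup_le huQ h2))
    have := SimpleGraph.dist_le ((hadjvN.toWalk).append hadjNw.toWalk)
    simp only [SimpleGraph.Walk.length_append, SimpleGraph.Walk.length_cons,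
      SimpleGraph.Walk.length_nil] at this
    omega

/-- Any strong resolving set of a connected `Γ(R)` with infinitely many vertices
is infinite. -/
lemma comax_srs_infinite (hc : (comaxGraph R).Connected)
    [hVI : Infinite {I : Ideal R // IsComaxVertex R I}]
    {S : Set {I : Ideal R // IsComaxVertex R I}}
    (hS : IsStrongResolvingSet (comaxGraph R) S) : S.Infinite := by
  by_cases hMT : Infinite {M : Ideal R // M.IsMaximal}
  · -- Infinitely many maximal ideals.
    haveI := hMT
    obtain ⟨M1⟩ : Nonempty {M : Ideal R // M.IsMaximal} := inferInstance
    -- every `M1 ⊓ N` is a vertex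
    have hvx : ∀ N : {M : Ideal R // M.IsMaximal}, N ≠ M1 →
        IsComaxVertex R (M1.1 ⊓ N.1) := by
      intro N hN
      obtain ⟨Q, hQ⟩ := (Set.infinite_univ.diff
        (Set.toFinite ({M1, N} : Set {M : Ideal R // M.IsMaximal}))).nonempty
      have hQM1 : Q ≠ M1 := fun h => hQ.2 (by simp [h])
      have hQN : Q ≠ N := fun h => hQ.2 (by simp [h])
      exact inf_isVertex M1.2 N.2 Q.2 (fun h => hQM1 (Subtype.ext h))
        (fun h => hQN (Subtype.ext h))
    set g : {N : {M : Ideal R // M.IsMaximal} // N ≠ M1} →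
        {I : Ideal R // IsComaxVertex R I} :=
      fun N => ⟨M1.1 ⊓ N.1.1, hvx N.1 N.2⟩ with hg
    have hginj : Function.Injective g := by
      intro N N' h
      have h' : M1.1 ⊓ N.1.1 = M1.1 ⊓ N'.1.1 := congrArg Subtype.val h
      have : M1.1 ⊓ N.1.1 ≤ N'.1.1 := h'.le.trans inf_le_right
      rcases max_of_inf_le M1.2 N.1.2 N'.1.2 this with heq | heq
      · exact absurd (Subtype.ext heq) N'.2
      · exact (Subtype.ext (Subtype.ext heq)).symm
    haveI : Infinite {N : {M : Ideal R // M.IsMaximal} // N ≠ M1} := by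
      have h1 : ({N | N ≠ M1} : Set {M : Ideal R // M.IsMaximal}) =
          Set.univ \ {M1} := by ext x; simp
      have h2 : ({N | N ≠ M1} : Set {M : Ideal R // M.IsMaximal}).Infinite := by
        rw [h1]; exact Set.infinite_univ.diff (Set.finite_singleton _)
      exact h2.to_subtype
    have hTinf : (Set.range g).Infinite := Set.infinite_range_of_injective hginj
    refine srs_infinite_of_infinite_mmd hc hTinf ?_ hS
    rintro u ⟨N, rfl⟩ v ⟨N', rfl⟩ huv
    have hNN' : N ≠ N' := fun h => huv (by rw [h])
    have hNN'i : N.1.1 ≠ N'.1.1 :=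
      fun h => hNN' (Subtype.ext (Subtype.ext h))
    have hNM : N.1.1 ≠ M1.1 := fun h => N.2 (Subtype.ext h)
    have hN'M : N'.1.1 ≠ M1.1 := fun h => N'.2 (Subtype.ext h)
    exact ⟨inf_mdf hc M1.2 N.1.2 N'.1.2 hNM hN'M hNN'i rfl rfl,
      inf_mdf hc M1.2 N'.1.2 N.1.2 hN'M hNM hNN'i.symm rfl rfl⟩
  · -- Finitely many maximal ideals: use twins.
    haveI : Finite {M : Ideal R // M.IsMaximal} := not_infinite_iff_finite.mp hMT
    set σ : {I : Ideal R // IsComaxVertex R I} →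
        Set {M : Ideal R // M.IsMaximal} := fun I => {Q | I.1 ≤ Q.1} with hσ
    obtain ⟨y, hy⟩ := Finite.exists_infinite_fiber σ
    have hTinf : (σ ⁻¹' {y}).Infinite := Set.infinite_coe_iff.mp hy
    refine srs_infinite_of_infinite_mmd hc hTinf ?_ hS
    intro u hu v hv huv
    have hsame : ∀ Q : Ideal R, Q.IsMaximal → (u.1 ≤ Q ↔ v.1 ≤ Q) := by
      intro Q hQ
      have h1 : σ u = y := hu
      have h2 : σ v = y := hv
      constructor
      · intro h
        have : (⟨Q, hQ⟩ : {M : Ideal R // M.IsMaximal}) ∈ σ u := h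
        rw [h1, ← h2] at this
        exact this
      · intro h
        have : (⟨Q, hQ⟩ : {M : Ideal R // M.IsMaximal}) ∈ σ v := h
        rw [h2, ← h1] at this
        exact this
    exact ⟨twin_mdf hc huv hsame,
      twin_mdf hc huv.symm (fun Q hQ => (hsame Q hQ).symm)⟩

end RingAux

/-- For a commutative ring `R` with `Γ(R)` connected, the strong metric
dimension of `Γ(R)` is finite iff `Γ(R)` has finitely many vertices. -/
theorem stmt_3 (R : Type*) [CommRing R] (hconn : (comaxGraph R).Connected) :
    sdim (comaxGraph R) < Cardinal.aleph0 ↔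
      Finite {I : Ideal R // IsComaxVertex R I} := by
  have huniv : IsStrongResolvingSet (comaxGraph R)
      (Set.univ : Set {I : Ideal R // IsComaxVertex R I}) := by
    intro u v huv
    exact ⟨v, trivial, Or.inl (by rw [SimpleGraph.dist_self, add_zero])⟩
  constructor
  · intro hs
    by_contra hfin
    rw [not_finite_iff_infinite] at hfin
    have hle : Cardinal.aleph0 ≤ sdim (comaxGraph R) := by
      haveI : Nonempty {S : Set {I : Ideal R // IsComaxVertex R I} //
          IsStrongResolvingSet (comaxGraph R) S} := ⟨⟨Set.univ, huniv⟩⟩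
      refine le_ciInf fun S => ?_
      have hinf : S.1.Infinite := comax_srs_infinite hconn S.2
      haveI := hinf.to_subtype
      exact Cardinal.aleph0_le_mk _
    exact absurd hs (not_lt.mpr hle)
  · intro hfin
    have hle : sdim (comaxGraph R) ≤
        Cardinal.mk ↥(Set.univ : Set {I : Ideal R // IsComaxVertex R I}) :=
      ciInf_le' (fun S : {S : Set {I : Ideal R // IsComaxVertex R I} //
        IsStrongResolvingSet (comaxGraph R) S} => Cardinal.mk ↥(S.1)) ⟨Set.univ, huniv⟩
    haveI : Finite ↥(Set.univ : Set {I : Ideal R // IsComaxVertex R I}) :=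
      Set.finite_univ.to_subtype
    exact lt_of_le_of_lt hle (Cardinal.lt_aleph0_of_finite _)

end CoMax
end

section
/- Let R ≅ F_1 × ··· × F_n, where each F_i is a field and n ≥ 2, and let I, J be two distinct vertices of the co-maximal ideal graph Γ(R). Then the distance d(I,J) in Γ(R) equals 2 if and only if I ∩ J ≠ 0 and I + J ≠ R. -/
/-! Common definitions: metric/strong-metric dimension, strong resolving graph,
independence number, and the co-maximal ideal graph of a commutative ring. -/

namespace CoMax

variable {V : Type*}

section Aux

variable {ι : Type*} {R : ι → Type*} [∀ i, CommRing (R i)]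

lemma mem_piIdeal' {I : ∀ i, Ideal (R i)} {x : ∀ i, R i} :
    x ∈ piIdeal I ↔ ∀ i, x i ∈ I i := Iff.rfl

lemma eq_piIdeal_comp [Fintype ι] [DecidableEq ι] (K : Ideal (∀ i, R i)) :
    K = piIdeal (comp K) := by
  refine le_antisymm ?_ ?_
  · intro x hx i
    exact Ideal.mem_map_of_mem (Pi.evalRingHom R i) hx
  intro x hx
  have h : ∀ i, ∃ y ∈ K, y i = x i := by
    intro i
    have hx' : x i ∈ K.map (Pi.evalRingHom R i) := hx i
    rw [Ideal.mem_map_iff_of_surjective _ (Function.surjective_eval i)] at hx'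
    obtain ⟨y, hy, hyx⟩ := hx'
    exact ⟨y, hy, hyx⟩
  choose y hy hyx using h
  have hx' : x = ∑ i, Pi.single i (x i) := (Finset.univ_sum_single x).symm
  rw [hx']
  refine Ideal.sum_mem K fun i _ => ?_
  have : Pi.single i (x i) = Pi.single i 1 * y i := by
    funext j
    by_cases hj : j = i
    · subst hj; simp [hyx j]
    · simp [Pi.single_apply, hj]
  rw [this]
  exact K.mul_mem_left _ (hy i)

lemma piIdeal_sup (A B : ∀ i, Ideal (R i)) :
    piIdeal A ⊔ piIdeal B = piIdeal (fun i => A i ⊔ B i) := by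
  refine le_antisymm (sup_le (fun x hx i => Ideal.mem_sup_left (hx i))
    (fun x hx i => Ideal.mem_sup_right (hx i))) (fun x hx => ?_)
  have h : ∀ i, ∃ a ∈ A i, ∃ b ∈ B i, a + b = x i := fun i =>
    Submodule.mem_sup.mp (hx i)
  choose a ha b hb hab using h
  exact Submodule.mem_sup.mpr ⟨a, ha, b, hb, funext hab⟩

lemma piIdeal_eq_top {A : ∀ i, Ideal (R i)} :
    piIdeal A = ⊤ ↔ ∀ i, A i = ⊤ := by
  constructor
  · intro h i
    rw [Ideal.eq_top_iff_one]
    have : (1 : ∀ i, R i) ∈ piIdeal A := h ▸ Submodule.mem_top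
    exact this i
  · intro h
    rw [Ideal.eq_top_iff_one]
    intro i
    rw [h i]; trivial

lemma piIdeal_eq_bot {A : ∀ i, Ideal (R i)} [DecidableEq ι] :
    piIdeal A = ⊥ ↔ ∀ i, A i = ⊥ := by
  constructor
  · intro h i
    rw [eq_bot_iff]
    intro a ha
    have hm : Pi.single i a ∈ piIdeal A := by
      intro j
      by_cases hj : j = i
      · subst hj; simpa using ha
      · simp [Pi.single_apply, hj]
    rw [h] at hm
    have := congrFun (Ideal.mem_bot.mp hm) i
    simpa using this
  · intro h
    rw [eq_bot_iff]
    intro x hx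
    have : x = 0 := funext fun i => by have := hx i; rw [h i] at this; simpa using this
    simp [this]

lemma piIdeal_inf (A B : ∀ i, Ideal (R i)) :
    piIdeal A ⊓ piIdeal B = piIdeal (fun i => A i ⊓ B i) := by
  ext x
  simp only [Submodule.mem_inf, mem_piIdeal']
  constructor
  · rintro ⟨h1, h2⟩ i; exact ⟨h1 i, h2 i⟩
  · intro h; exact ⟨fun i => (h i).1, fun i => (h i).2⟩

lemma jacobson_bot_pi {F : ι → Type*} [∀ i, Field (F i)] [DecidableEq ι] :
    Ideal.jacobson (⊥ : Ideal (∀ i, F i)) = ⊥ := by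
  rw [eq_bot_iff]
  intro x hx
  rw [Ideal.mem_bot]
  by_contra hne
  obtain ⟨i, hi⟩ : ∃ i, x i ≠ 0 := by
    by_contra h; push_neg at h; exact hne (funext h)
  have hu := Ideal.mem_jacobson_bot.mp hx (Pi.single i (-(x i)⁻¹))
  have h0 : (x * Pi.single i (-(x i)⁻¹) + 1) i = 0 := by
    simp [mul_inv_cancel₀ hi]
  have hu' := hu.map (Pi.evalRingHom F i)
  rw [Pi.evalRingHom_apply, h0] at hu'
  exact not_isUnit_zero hu'

lemma bot_ne_top_ideal {S : Type*} [CommRing S] [Nontrivial S] :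
    (⊥ : Ideal S) ≠ ⊤ := by
  intro h
  have : (1 : S) ∈ (⊥ : Ideal S) := by rw [h]; trivial
  exact one_ne_zero (Ideal.mem_bot.mp this)

lemma exists_mid {V : Type*} {G : SimpleGraph V} {u v : V} (p : G.Walk u v)
    (hp : p.length = 2) : ∃ w, G.Adj u w ∧ G.Adj w v := by
  cases p with
  | nil => simp at hp
  | cons h q =>
    cases q with
    | nil => simp at hp
    | cons h' q' =>
      cases q' with
      | nil => exact ⟨_, h, h'⟩
      | cons h'' q'' => simp [SimpleGraph.Walk.length_cons] at hp

end Aux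

/-- For `R ≅ F_1 × ⋯ × F_n` a product of fields, `n ≥ 2`, and distinct
vertices `I`, `J` of `Γ(R)`: `d(I,J) = 2` iff `I ∩ J ≠ 0` and `I + J ≠ R`. -/
theorem stmt_4 (n : ℕ) (hn : 2 ≤ n) (F : Fin n → Type*) [∀ i, Field (F i)]
    (I J : {I : Ideal (∀ i, F i) // IsComaxVertex (∀ i, F i) I}) (hIJ : I ≠ J) :
    (comaxGraph (∀ i, F i)).dist I J = 2 ↔ I.1 ⊓ J.1 ≠ ⊥ ∧ I.1 ⊔ J.1 ≠ ⊤ := by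
  classical
  have hvert : ∀ K : Ideal (∀ i, F i), IsComaxVertex (∀ i, F i) K ↔ K ≠ ⊤ ∧ K ≠ ⊥ := by
    intro K
    unfold IsComaxVertex
    rw [jacobson_bot_pi, le_bot_iff]
  have hId := eq_piIdeal_comp I.1
  have hJd := eq_piIdeal_comp J.1
  constructor
  · intro hd
    have hsup : I.1 ⊔ J.1 ≠ ⊤ := by
      intro h
      have : (comaxGraph (∀ i, F i)).dist I J = 1 :=
        SimpleGraph.dist_eq_one_iff_adj.mpr ⟨hIJ, h⟩
      omega
    refine ⟨?_, hsup⟩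
    have hreach : (comaxGraph (∀ i, F i)).Reachable I J := by
      by_contra h
      have : (comaxGraph (∀ i, F i)).dist I J = 0 :=
        SimpleGraph.dist_eq_zero_iff_eq_or_not_reachable.mpr (Or.inr h)
      omega
    obtain ⟨p, hp⟩ := hreach.exists_walk_length_eq_dist
    rw [hd] at hp
    obtain ⟨K, h1, h2⟩ := exists_mid p hp
    intro hbot
    have hKd := eq_piIdeal_comp K.1
    have hIK : ∀ i, comp I.1 i ⊔ comp K.1 i = ⊤ := by
      have h := h1.2
      rw [hId, hKd, piIdeal_sup, piIdeal_eq_top] at h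
      exact h
    have hKJ : ∀ i, comp K.1 i ⊔ comp J.1 i = ⊤ := by
      have h := h2.2
      rw [hKd, hJd, piIdeal_sup, piIdeal_eq_top] at h
      exact h
    rw [hId, hJd, piIdeal_inf, piIdeal_eq_bot] at hbot
    have hKtop : ∀ i, comp K.1 i = ⊤ := by
      intro i
      rcases Ideal.eq_bot_or_top (comp K.1 i) with hk | hk
      · exfalso
        have hIi : comp I.1 i = ⊤ := by
          rcases Ideal.eq_bot_or_top (comp I.1 i) with h' | h'
          · have := hIK i
            rw [h', hk, sup_idem] at this
            exact absurd this bot_ne_top_ideal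
          · exact h'
        have hJi : comp J.1 i = ⊤ := by
          rcases Ideal.eq_bot_or_top (comp J.1 i) with h' | h'
          · have := hKJ i
            rw [h', hk, sup_idem] at this
            exact absurd this bot_ne_top_ideal
          · exact h'
        have := hbot i
        rw [hIi, hJi, inf_idem] at this
        exact bot_ne_top_ideal this.symm
      · exact hk
    have hKt : K.1 = ⊤ := by rw [hKd, piIdeal_eq_top]; exact hKtop
    exact ((hvert K.1).mp K.2).1 hKt
  · rintro ⟨hbot, hsup⟩
    have hbot' : ¬ ∀ i, comp I.1 i ⊓ comp J.1 i = ⊥ := by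
      intro hall
      exact hbot (by rw [hId, hJd, piIdeal_inf, piIdeal_eq_bot]; exact hall)
    push_neg at hbot'
    obtain ⟨i0, hi0⟩ := hbot'
    have hsup' : ¬ ∀ i, comp I.1 i ⊔ comp J.1 i = ⊤ := by
      intro hall
      exact hsup (by rw [hId, hJd, piIdeal_sup, piIdeal_eq_top]; exact hall)
    push_neg at hsup'
    obtain ⟨i1, hi1⟩ := hsup'
    have hIi0 : comp I.1 i0 = ⊤ := by
      rcases Ideal.eq_bot_or_top (comp I.1 i0) with h | h
      · exact absurd (by rw [h, bot_inf_eq]) hi0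
      · exact h
    have hJi0 : comp J.1 i0 = ⊤ := by
      rcases Ideal.eq_bot_or_top (comp J.1 i0) with h | h
      · exact absurd (by rw [h, inf_bot_eq]) hi0
      · exact h
    have hIi1 : comp I.1 i1 = ⊥ := by
      rcases Ideal.eq_bot_or_top (comp I.1 i1) with h | h
      · exact h
      · exact absurd (by rw [h]; simp) hi1
    set K0 : Ideal (∀ i, F i) :=
      piIdeal (fun i => if comp I.1 i = ⊤ ∧ comp J.1 i = ⊤ then ⊥ else ⊤) with hK0def
    have hK0top : K0 ≠ ⊤ := by
      rw [hK0def]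
      intro hall
      rw [piIdeal_eq_top] at hall
      have := hall i0
      rw [if_pos ⟨hIi0, hJi0⟩] at this
      exact bot_ne_top_ideal this
    have hK0bot : K0 ≠ ⊥ := by
      rw [hK0def]
      intro hall
      rw [piIdeal_eq_bot] at hall
      have := hall i1
      rw [if_neg (fun hc => bot_ne_top_ideal (hIi1 ▸ hc.1 : (⊥ : Ideal (F i1)) = ⊤))] at this
      exact bot_ne_top_ideal this.symm
    have hKI : K0 ⊔ I.1 = ⊤ := by
      conv_lhs => rw [hId]
      rw [hK0def, piIdeal_sup, piIdeal_eq_top]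
      intro i
      by_cases hc : comp I.1 i = ⊤ ∧ comp J.1 i = ⊤
      · rw [if_pos hc, hc.1]; exact sup_top_eq _
      · rw [if_neg hc]; simp
    have hKJ : K0 ⊔ J.1 = ⊤ := by
      conv_lhs => rw [hJd]
      rw [hK0def, piIdeal_sup, piIdeal_eq_top]
      intro i
      by_cases hc : comp I.1 i = ⊤ ∧ comp J.1 i = ⊤
      · rw [if_pos hc, hc.2]; exact sup_top_eq _
      · rw [if_neg hc]; simp
    have Kvert : IsComaxVertex (∀ i, F i) K0 := (hvert K0).mpr ⟨hK0top, hK0bot⟩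
    have hIKadj : (comaxGraph (∀ i, F i)).Adj I ⟨K0, Kvert⟩ := by
      refine ⟨?_, ?_⟩
      · intro h
        have h' : I.1 = K0 := congrArg Subtype.val h
        rw [h', sup_idem] at hKI
        exact hK0top hKI
      · show I.1 ⊔ K0 = ⊤
        rw [sup_comm]; exact hKI
    have hKJadj : (comaxGraph (∀ i, F i)).Adj ⟨K0, Kvert⟩ J := by
      refine ⟨?_, ?_⟩
      · intro h
        have h' : K0 = J.1 := congrArg Subtype.val h
        rw [h', sup_idem] at hKJ
        exact J.2.1 hKJ
      · show K0 ⊔ J.1 = ⊤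
        exact hKJ
    let W : (comaxGraph (∀ i, F i)).Walk I J :=
      SimpleGraph.Walk.cons hIKadj (SimpleGraph.Walk.cons hKJadj SimpleGraph.Walk.nil)
    have hWlen : W.length = 2 := rfl
    have hle : (comaxGraph (∀ i, F i)).dist I J ≤ 2 :=
      hWlen ▸ SimpleGraph.dist_le W
    have h0 : (comaxGraph (∀ i, F i)).dist I J ≠ 0 := fun h =>
      hIJ (((SimpleGraph.Walk.reachable W).dist_eq_zero_iff).mp h)
    have h1 : (comaxGraph (∀ i, F i)).dist I J ≠ 1 := fun h =>
      hsup (SimpleGraph.dist_eq_one_iff_adj.mp h).2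
    omega


end CoMax
end

section
/- Let R ≅ F_1 × ··· × F_n, where each F_i is a field and n ≥ 3. Then a vertex I of Γ(R)** is isolated in Γ(R)** if and only if I is a maximal ideal of R. -/
/-! Common definitions: metric/strong-metric dimension, strong resolving graph,
independence number, and the co-maximal ideal graph of a commutative ring. -/

namespace CoMax

variable {V : Type*}

lemma eval_surj {ι : Type*} [DecidableEq ι] {R : ι → Type*} [∀ i, CommRing (R i)] (i : ι) :
    Function.Surjective (Pi.evalRingHom R i) := fun y => ⟨Pi.single i y, Pi.single_eq_same i y⟩

lemma mem_comp_iff {ι : Type*} [DecidableEq ι] {R : ι → Type*} [∀ i, CommRing (R i)]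
    {K : Ideal (∀ i, R i)} {i : ι} {y : R i} :
    y ∈ comp K i ↔ ∃ x ∈ K, x i = y :=
  Ideal.mem_map_iff_of_surjective _ (eval_surj i)

lemma mem_iff_comp {ι : Type*} [Fintype ι] [DecidableEq ι] {R : ι → Type*}
    [∀ i, CommRing (R i)] {K : Ideal (∀ i, R i)} {x : ∀ i, R i} :
    x ∈ K ↔ ∀ i, x i ∈ comp K i := by
  constructor
  · intro hx i
    exact mem_comp_iff.mpr ⟨x, hx, rfl⟩
  · intro h
    rw [← Finset.univ_sum_single x]
    refine Ideal.sum_mem _ fun i _ => ?_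
    obtain ⟨y, hy, hyi⟩ := mem_comp_iff.mp (h i)
    have hxy : Pi.single i (x i) = Pi.single i 1 * y := by
      funext j
      by_cases hj : j = i
      · subst hj; simp [hyi]
      · simp [Pi.single_apply, hj]
    rw [hxy]
    exact K.mul_mem_left _ hy

lemma mem_piIdeal_iff {ι : Type*} {R : ι → Type*} [∀ i, CommRing (R i)]
    {T : ∀ i, Ideal (R i)} {x : ∀ i, R i} : x ∈ piIdeal T ↔ ∀ i, x i ∈ T i := Iff.rfl

/-- For `R ≅ F_1 × ⋯ × F_n` a product of fields, `n ≥ 3`, a vertex `I`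
of `Γ(R)**` is isolated iff `I` is a maximal ideal of `R`. -/
theorem stmt_8 (n : ℕ) (hn : 3 ≤ n) (F : Fin n → Type*) [∀ i, Field (F i)]
    (I : {I : Ideal (∀ i, F i) // IsComaxVertex (∀ i, F i) I}) :
    (∀ J, ¬ (comaxDoubleStar (∀ i, F i)).Adj I J) ↔ I.1.IsMaximal := by
  obtain ⟨hItop, hIJac⟩ := I.2
  classical
  constructor
  · intro hiso
    by_contra hmax
    have hIbot : I.1 ≠ ⊥ := fun h => hIJac (by rw [h]; exact bot_le)
    have hcomps : ∀ i, comp I.1 i = ⊥ ∨ comp I.1 i = ⊤ := fun i => Ideal.eq_bot_or_top _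
    obtain ⟨k, hk⟩ : ∃ k, comp I.1 k = ⊥ := by
      by_contra h
      push_neg at h
      refine hItop (Ideal.eq_top_iff_one _ |>.mpr (mem_iff_comp.mpr fun i => ?_))
      rw [(hcomps i).resolve_left (h i)]
      trivial
    obtain ⟨j, hjk, hj⟩ : ∃ j, j ≠ k ∧ comp I.1 j = ⊥ := by
      by_contra h
      push_neg at h
      refine hmax ?_
      have hI : I.1 = RingHom.ker (Pi.evalRingHom F k) := by
        ext x
        rw [mem_iff_comp, RingHom.mem_ker]
        constructor
        · intro hx
          have := hx k
          rw [hk] at this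
          exact Ideal.mem_bot.mp this
        · intro hx i
          by_cases hi : i = k
          · subst hi; rw [hk]; exact Ideal.mem_bot.mpr hx
          · rw [(hcomps i).resolve_left (h i hi)]; trivial
      rw [hI]
      exact RingHom.ker_isMaximal_of_surjective _ (eval_surj k)
    obtain ⟨s, hs⟩ : ∃ s, comp I.1 s = ⊤ := by
      by_contra h
      push_neg at h
      refine hIbot (eq_bot_iff.mpr fun x hx => ?_)
      refine Ideal.mem_bot.mpr (funext fun i => ?_)
      have := mem_iff_comp.mp hx i
      rw [(hcomps i).resolve_right (h i)] at this
      exact Ideal.mem_bot.mp this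
    have hsk : s ≠ k := by rintro rfl; rw [hk] at hs; exact bot_ne_top hs
    have hsj : s ≠ j := by rintro rfl; rw [hj] at hs; exact bot_ne_top hs
    set T : ∀ i, Ideal (F i) := fun i => if i = j then ⊤ else if i = s then ⊥ else comp I.1 i
      with hT
    set J : Ideal (∀ i, F i) := piIdeal T with hJ
    have hsI : Pi.single s (1 : F s) ∈ I.1 := by
      refine mem_iff_comp.mpr fun i => ?_
      by_cases hi : i = s
      · subst hi; rw [hs]; trivial
      · rw [Pi.single_eq_of_ne hi]; exact zero_mem _
    have hsJ : Pi.single s (1 : F s) ∉ J := by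
      intro h
      have := mem_piIdeal_iff.mp h s
      rw [hT] at this
      simp only [if_neg hsj, if_pos rfl, Pi.single_eq_same] at this
      exact one_ne_zero (Ideal.mem_bot.mp this)
    have hjJ : Pi.single j (1 : F j) ∈ J := by
      refine mem_piIdeal_iff.mpr fun i => ?_
      by_cases hi : i = j
      · subst hi; rw [hT]; simp
      · rw [Pi.single_eq_of_ne hi]; exact zero_mem _
    have hjI : Pi.single j (1 : F j) ∉ I.1 := by
      intro h
      have := mem_iff_comp.mp h j
      rw [hj, Pi.single_eq_same] at this
      exact one_ne_zero (Ideal.mem_bot.mp this)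
    have hkerj : (RingHom.ker (Pi.evalRingHom F j)).IsMaximal :=
      RingHom.ker_isMaximal_of_surjective _ (eval_surj j)
    have hkerk : (RingHom.ker (Pi.evalRingHom F k)).IsMaximal :=
      RingHom.ker_isMaximal_of_surjective _ (eval_surj k)
    have hJvert : IsComaxVertex (∀ i, F i) J := by
      constructor
      · intro h
        exact hsJ (h.symm ▸ Submodule.mem_top)
      · intro hle
        have hjac : Ideal.jacobson (⊥ : Ideal (∀ i, F i)) ≤ RingHom.ker (Pi.evalRingHom F j) :=
          sInf_le ⟨bot_le, hkerj⟩
        have := hjac (hle hjJ)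
        rw [RingHom.mem_ker] at this
        exact one_ne_zero ((Pi.single_eq_same j (1 : F j)).symm.trans this)
    refine hiso ⟨J, hJvert⟩ ⟨?_, ?_, ?_, ?_⟩
    · intro h
      exact hjI (congrArg Subtype.val h ▸ hjJ)
    · intro h
      refine hkerk.ne_top (top_le_iff.mp ?_)
      rw [← h]
      refine sup_le ?_ ?_
      · intro x hx
        rw [RingHom.mem_ker]
        have := mem_iff_comp.mp hx k
        rw [hk] at this
        exact Ideal.mem_bot.mp this
      · intro x hx
        rw [RingHom.mem_ker]
        have := mem_piIdeal_iff.mp hx k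
        rw [hT] at this
        simp only [if_neg (Ne.symm hjk), if_neg (Ne.symm hsk), hk] at this
        exact Ideal.mem_bot.mp this
    · intro h
      exact hsJ (h hsI)
    · intro h
      exact hjI (h hjJ)
  · intro hmax J hadj
    obtain ⟨hne, hsup, hIJ, hJI⟩ := hadj
    exact hsup (hmax.1.2 _ (left_lt_sup.mpr hJI))


end CoMax
end

section
/- Let R ≅ F_1 × ··· × F_n, where each F_i is a field and n ≥ 3. Then the subgraph of Γ(R)** induced on the set of vertices that are not maximal ideals of R is connected; consequently Γ(R)** is the disjoint union of a connected graph H and n isolated vertices (the n maximal ideals of R). -/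
/-! Common definitions: metric/strong-metric dimension, strong resolving graph,
independence number, and the co-maximal ideal graph of a commutative ring. -/

namespace CoMax

variable {V : Type*}

section aux

variable {n : ℕ} {F : Fin n → Type*} [∀ i, Field (F i)]

lemma comp_piIdeal (I : ∀ i, Ideal (F i)) (i : Fin n) :
    comp (piIdeal I) i = I i := by
  apply le_antisymm
  · rw [comp, Ideal.map_le_iff_le_comap]
    intro x hx; exact hx i
  · intro a ha
    have hm : (Pi.single i a : ∀ j, F j) ∈ piIdeal I := by
      intro j
      rcases eq_or_ne j i with rfl | h
      · simpa using ha
      · simp [Pi.single_eq_of_ne h]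
    have := Ideal.mem_map_of_mem (Pi.evalRingHom F i) hm
    simpa [comp] using this

lemma mem_iff_comp_s9 {I : Ideal (∀ i, F i)} {x : ∀ i, F i} :
    x ∈ I ↔ ∀ i, x i ∈ comp I i := by
  constructor
  · intro hx i; exact Ideal.mem_map_of_mem _ hx
  · intro hx
    have hsingle : ∀ i, (Pi.single i (x i) : ∀ j, F j) ∈ I := by
      intro i
      rcases Ideal.eq_bot_or_top (comp I i) with hb | ht
      · have : x i = 0 := by simpa [hb] using hx i
        simp [this]
      · -- find u ∈ I with u i ≠ 0
        have hne : ∃ u ∈ I, u i ≠ 0 := by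
          by_contra h
          push_neg at h
          have : comp I i ≤ ⊥ := by
            rw [comp, Ideal.map_le_iff_le_comap]
            intro u hu
            simpa using h u hu
          rw [ht] at this
          have h1 : (1 : F i) ∈ (⊥ : Ideal (F i)) := this Submodule.mem_top
          simpa using h1
        obtain ⟨u, hu, hui⟩ := hne
        have hy : (Pi.single i ((x i) * (u i)⁻¹) : ∀ j, F j) * u ∈ I :=
          I.mul_mem_left _ hu
        have : (Pi.single i ((x i) * (u i)⁻¹) : ∀ j, F j) * u = Pi.single i (x i) := by
          funext j
          rcases eq_or_ne j i with rfl | h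
          · simp [Pi.single_eq_same, mul_assoc, inv_mul_cancel₀ hui]
          · simp [Pi.single_eq_of_ne h]
        rwa [this] at hy
    have hx2 : x = ∑ i, Pi.single i (x i) := (Finset.univ_sum_single x).symm
    rw [hx2]
    exact Ideal.sum_mem _ fun i _ => hsingle i

lemma le_iff_comp {I J : Ideal (∀ i, F i)} :
    I ≤ J ↔ ∀ i, comp I i ≤ comp J i := by
  constructor
  · intro h i; exact Ideal.map_mono h
  · intro h x hx
    rw [mem_iff_comp_s9] at hx ⊢
    exact fun i => h i (hx i)

lemma ext_comp {I J : Ideal (∀ i, F i)} (h : ∀ i, comp I i = comp J i) : I = J :=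
  le_antisymm (le_iff_comp.2 fun i => (h i).le) (le_iff_comp.2 fun i => (h i).ge)

lemma eq_top_iff_comp {I : Ideal (∀ i, F i)} :
    I = ⊤ ↔ ∀ i, comp I i = ⊤ := by
  constructor
  · rintro rfl i; exact Ideal.map_top _
  · intro h
    rw [eq_top_iff, le_iff_comp]
    intro i
    rw [show comp (⊤ : Ideal (∀ i, F i)) i = ⊤ from Ideal.map_top _, ← h i]

lemma eq_bot_iff_comp {I : Ideal (∀ i, F i)} :
    I = ⊥ ↔ ∀ i, comp I i = ⊥ := by
  constructor
  · rintro rfl i; exact Ideal.map_bot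
  · intro h
    rw [eq_bot_iff, le_iff_comp]
    intro i
    rw [h i]
    exact bot_le

lemma comp_sup (I J : Ideal (∀ i, F i)) (i : Fin n) :
    comp (I ⊔ J) i = comp I i ⊔ comp J i := Ideal.map_sup _ _ _

/-- The maximal ideal `M i = ker (eval i)`. -/
noncomputable def MM (F : Fin n → Type*) [∀ i, Field (F i)] (i : Fin n) :
    Ideal (∀ j, F j) :=
  RingHom.ker (Pi.evalRingHom F i)

lemma MM_isMaximal (i : Fin n) : (MM F i).IsMaximal :=
  RingHom.ker_isMaximal_of_surjective _ (Function.surjective_eval i)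

open Classical in
lemma comp_MM (i j : Fin n) : comp (MM F i) j = if j = i then ⊥ else ⊤ := by
  have : MM F i = piIdeal (fun j => if j = i then ⊥ else ⊤) := by
    apply Ideal.ext
    intro x
    simp only [MM, RingHom.mem_ker, Pi.evalRingHom_apply]
    constructor
    · intro hx j
      rcases eq_or_ne j i with rfl | h
      · beta_reduce; rw [if_pos rfl, Ideal.mem_bot]; exact hx
      · simp [h]
    · intro hx
      have := hx i
      beta_reduce at this; rw [if_pos rfl, Ideal.mem_bot] at this; exact this
  rw [this, comp_piIdeal]

lemma jacobson_bot_eq : Ideal.jacobson (⊥ : Ideal (∀ i, F i)) = ⊥ := by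
  apply le_antisymm _ bot_le
  intro x hx
  have hM : ∀ i, Ideal.jacobson (⊥ : Ideal (∀ i, F i)) ≤ MM F i := fun i =>
    sInf_le ⟨bot_le, MM_isMaximal i⟩
  have hx0 : ∀ i, x i = 0 := fun i => hM i hx
  funext i; exact hx0 i

end aux

section aux2

variable {n : ℕ} {F : Fin n → Type*} [∀ i, Field (F i)]

lemma bot_ne_top' (j : Fin n) : (⊥ : Ideal (F j)) ≠ ⊤ := fun h => by
  have : (1 : F j) ∈ (⊥ : Ideal (F j)) := h ▸ Submodule.mem_top
  simpa using this

lemma isMaximal_iff_eq_MM {I : Ideal (∀ i, F i)} :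
    I.IsMaximal ↔ ∃ i, I = MM F i := by
  constructor
  · intro hI
    have hne : I ≠ ⊤ := hI.ne_top
    obtain ⟨i, hi⟩ : ∃ i, comp I i = ⊥ := by
      by_contra h
      push_neg at h
      exact hne (eq_top_iff_comp.2 fun i => (Ideal.eq_bot_or_top _).resolve_left (h i))
    have hle : I ≤ MM F i := by
      rw [le_iff_comp]
      intro j
      rw [comp_MM]
      rcases eq_or_ne j i with rfl | hj
      · rw [hi]; simp
      · simp [hj]
    exact ⟨i, hI.eq_of_le (MM_isMaximal i).ne_top hle⟩
  · rintro ⟨i, rfl⟩; exact MM_isMaximal i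

lemma two_zeros {I : Ideal (∀ i, F i)} (hne : I ≠ ⊤) (hmax : ¬ I.IsMaximal) :
    ∃ i j, i ≠ j ∧ comp I i = ⊥ ∧ comp I j = ⊥ := by
  obtain ⟨i, hi⟩ : ∃ i, comp I i = ⊥ := by
    by_contra h
    push_neg at h
    exact hne (eq_top_iff_comp.2 fun i => (Ideal.eq_bot_or_top _).resolve_left (h i))
  rcases em (∃ j, j ≠ i ∧ comp I j = ⊥) with ⟨j, hji, hj⟩ | h
  · exact ⟨j, i, hji, hj, hi⟩
  · push_neg at h
    exfalso
    apply hmax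
    rw [isMaximal_iff_eq_MM]
    refine ⟨i, ext_comp fun j => ?_⟩
    rw [comp_MM]
    rcases eq_or_ne j i with rfl | hj
    · simpa using hi
    · simp only [hj, if_neg hj]
      exact (Ideal.eq_bot_or_top _).resolve_left (h j hj)

noncomputable def EE (F : Fin n → Type*) [∀ i, Field (F i)] (k : Fin n) :
    Ideal (∀ j, F j) :=
  piIdeal fun j => if j = k then ⊤ else ⊥

lemma comp_EE (k j : Fin n) : comp (EE F k) j = if j = k then ⊤ else ⊥ :=
  comp_piIdeal _ _

lemma exists_third (hn : 3 ≤ n) (i j : Fin n) : ∃ k, k ≠ i ∧ k ≠ j := by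
  by_contra h
  push_neg at h
  have hsub : (Finset.univ : Finset (Fin n)) ⊆ {i, j} := by
    intro k _
    simp only [Finset.mem_insert, Finset.mem_singleton]
    rcases eq_or_ne k i with rfl | hk
    · exact Or.inl rfl
    · exact Or.inr (h k hk)
  have h1 := Finset.card_le_card hsub
  have h2 : ({i, j} : Finset (Fin n)).card ≤ 2 :=
    (Finset.card_insert_le _ _).trans (by simp)
  simp only [Finset.card_univ, Fintype.card_fin] at h1
  omega

lemma vertex_EE (hn : 3 ≤ n) (k : Fin n) : IsComaxVertex (∀ i, F i) (EE F k) := by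
  have hnt : Nontrivial (Fin n) := Fin.nontrivial_iff_two_le.mpr (by omega)
  constructor
  · intro h
    obtain ⟨j, hj⟩ := exists_ne k
    have := eq_top_iff_comp.1 h j
    rw [comp_EE, if_neg hj] at this
    exact bot_ne_top' j this
  · rw [jacobson_bot_eq, le_bot_iff]
    intro h
    have := eq_bot_iff_comp.1 h k
    rw [comp_EE, if_pos rfl] at this
    exact bot_ne_top' k this.symm

lemma not_max_EE (hn : 3 ≤ n) (k : Fin n) : ¬ (EE F k).IsMaximal := by
  rw [isMaximal_iff_eq_MM]
  rintro ⟨i, hi⟩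
  obtain ⟨a, hak, _⟩ := exists_third hn k k
  obtain ⟨b, hbk, hba⟩ := exists_third hn k a
  have ha : comp (EE F k) a = ⊥ := by rw [comp_EE, if_neg hak]
  have hb : comp (EE F k) b = ⊥ := by rw [comp_EE, if_neg hbk]
  rw [hi, comp_MM] at ha hb
  rcases eq_or_ne a i with rfl | h1
  · rcases eq_or_ne b a with rfl | h2
    · exact hba rfl
    · rw [if_neg h2] at hb; exact bot_ne_top' b hb.symm
  · rw [if_neg h1] at ha; exact bot_ne_top' a ha.symm

lemma adj_to_EE (hn : 3 ≤ n) {I : Ideal (∀ i, F i)} (hI : IsComaxVertex (∀ i, F i) I)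
    {k j : Fin n} (hk : comp I k = ⊥) (hjk : j ≠ k) (hj : comp I j = ⊥) :
    I ≠ EE F k ∧ I ⊔ EE F k ≠ ⊤ ∧ ¬ I ≤ EE F k ∧ ¬ EE F k ≤ I := by
  have hIbot : I ≠ ⊥ := by
    have := hI.2
    rwa [jacobson_bot_eq, le_bot_iff] at this
  obtain ⟨m, hm⟩ : ∃ m, comp I m = ⊤ := by
    by_contra h
    push_neg at h
    exact hIbot (eq_bot_iff_comp.2 fun i => (Ideal.eq_bot_or_top _).resolve_right (h i))
  have hmk : m ≠ k := by rintro rfl; rw [hk] at hm; exact bot_ne_top' m hm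
  refine ⟨?_, ?_, ?_, ?_⟩
  · intro h
    rw [h, comp_EE, if_pos rfl] at hk
    exact bot_ne_top' k hk.symm
  · intro h
    have := eq_top_iff_comp.1 h j
    rw [comp_sup, hj, comp_EE, if_neg hjk, sup_idem] at this
    exact bot_ne_top' j this
  · intro h
    have := le_iff_comp.1 h m
    rw [hm, comp_EE, if_neg hmk, top_le_iff] at this
    exact bot_ne_top' m this
  · intro h
    have := le_iff_comp.1 h k
    rw [comp_EE, if_pos rfl, hk, top_le_iff] at this
    exact bot_ne_top' k this

end aux2


/-- For `R ≅ F_1 × ⋯ × F_n` a product of fields, `n ≥ 3`, the subgraph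
of `Γ(R)**` induced on the non-maximal vertices is connected; moreover every maximal
ideal is an isolated vertex of `Γ(R)**` and there are exactly `n` of them. -/
theorem stmt_9 (n : ℕ) (hn : 3 ≤ n) (F : Fin n → Type*) [∀ i, Field (F i)] :
    ((comaxDoubleStar (∀ i, F i)).induce {v : {I : Ideal (∀ i, F i) // IsComaxVertex (∀ i, F i) I} | ¬ v.1.IsMaximal}).Connected ∧
    (∀ v : {I : Ideal (∀ i, F i) // IsComaxVertex (∀ i, F i) I}, v.1.IsMaximal → ∀ u, ¬ (comaxDoubleStar (∀ i, F i)).Adj v u) ∧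
    {v : {I : Ideal (∀ i, F i) // IsComaxVertex (∀ i, F i) I} | v.1.IsMaximal}.ncard = n := by

  classical
  have hEv : ∀ k : Fin n, IsComaxVertex (∀ i, F i) (EE F k) := vertex_EE hn
  have hEnm : ∀ k : Fin n, ¬ (EE F k).IsMaximal := not_max_EE hn
  have hnt : Nontrivial (Fin n) := Fin.nontrivial_iff_two_le.mpr (by omega)
  refine ⟨?_, ?_, ?_⟩
  · -- connectedness
    set s : Set {I : Ideal (∀ i, F i) // IsComaxVertex (∀ i, F i) I} :=
      {v | ¬ v.1.IsMaximal} with hs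
    let vE : Fin n → ↥s := fun k => ⟨⟨EE F k, hEv k⟩, hEnm k⟩
    have key : ∀ v : ↥s, ∃ k, ((comaxDoubleStar (∀ i, F i)).induce s).Adj v (vE k) := by
      rintro ⟨⟨I, hI⟩, hnm⟩
      obtain ⟨i, j, hij, hi, hj⟩ := two_zeros hI.1 hnm
      obtain ⟨h1, h2, h3, h4⟩ := adj_to_EE hn hI hi (Ne.symm hij) hj
      exact ⟨i, Subtype.coe_ne_coe.mp h1, h2, h3, h4⟩
    rw [SimpleGraph.connected_iff]
    refine ⟨?_, ⟨vE ⟨0, by omega⟩⟩⟩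
    intro u v
    obtain ⟨a, ha⟩ := key u
    obtain ⟨b, hb⟩ := key v
    have hEab : ((comaxDoubleStar (∀ i, F i)).induce s).Reachable (vE a) (vE b) := by
      rcases eq_or_ne a b with rfl | hab
      · exact SimpleGraph.Reachable.refl _
      · obtain ⟨c, hca, hcb⟩ := exists_third hn a b
        have hzb : comp (EE F a) b = ⊥ := by rw [comp_EE, if_neg (Ne.symm hab)]
        have hzc : comp (EE F a) c = ⊥ := by rw [comp_EE, if_neg hca]
        obtain ⟨h1, h2, h3, h4⟩ := adj_to_EE hn (hEv a) hzb hcb hzc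
        exact SimpleGraph.Adj.reachable ⟨Subtype.coe_ne_coe.mp h1, h2, h3, h4⟩
    exact (ha.reachable.trans hEab).trans hb.reachable.symm
  · -- maximal vertices are isolated
    intro v hv u hadj
    obtain ⟨hne, hsup, h3, h4⟩ := hadj
    have hveq := hv.eq_of_le hsup le_sup_left
    exact h4 (le_sup_right.trans hveq.ge)
  · -- exactly n maximal vertices
    have hMv : ∀ i : Fin n, IsComaxVertex (∀ j, F j) (MM F i) := by
      intro i
      refine ⟨(MM_isMaximal i).ne_top, ?_⟩
      rw [jacobson_bot_eq, le_bot_iff]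
      intro h
      obtain ⟨j, hj⟩ := exists_ne i
      have hc := eq_bot_iff_comp.1 h j
      rw [comp_MM, if_neg hj] at hc
      exact bot_ne_top' j hc.symm
    let g : Fin n → {I : Ideal (∀ j, F j) // IsComaxVertex (∀ j, F j) I} :=
      fun i => ⟨MM F i, hMv i⟩
    have hginj : Function.Injective g := by
      intro a b hab
      by_contra hne
      have hMeq : MM F a = MM F b := congrArg Subtype.val hab
      have h1 : comp (MM F a) a = ⊥ := by rw [comp_MM, if_pos rfl]
      rw [hMeq, comp_MM, if_neg hne] at h1
      exact bot_ne_top' a h1.symm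
    have hset : {v : {I : Ideal (∀ j, F j) // IsComaxVertex (∀ j, F j) I} | v.1.IsMaximal}
        = Set.range g := by
      ext v
      simp only [Set.mem_setOf_eq, Set.mem_range]
      constructor
      · intro hv
        obtain ⟨i, hi⟩ := isMaximal_iff_eq_MM.1 hv
        exact ⟨i, Subtype.ext hi.symm⟩
      · rintro ⟨i, rfl⟩
        exact MM_isMaximal i
    rw [hset, ← Set.image_univ, Set.ncard_image_of_injective _ hginj, Set.ncard_univ,
      Nat.card_eq_fintype_card, Fintype.card_fin]


end CoMax
end

section
/- Let R ≅ F_1 × F_2, where F_1 and F_2 are fields (equivalently, R is a reduced ring with exactly two maximal ideals and sdim_M(Γ(R)) finite). Then sdim_M(Γ(R)) = 1. -/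
/-! Common definitions: metric/strong-metric dimension, strong resolving graph,
independence number, and the co-maximal ideal graph of a commutative ring. -/

namespace CoMax

variable {V : Type*}

lemma jac_bot (F₁ F₂ : Type*) [Field F₁] [Field F₂] :
    Ideal.jacobson (⊥ : Ideal (F₁ × F₂)) = ⊥ := by
  refine le_antisymm (fun x hx => ?_) bot_le
  rw [Ideal.mem_jacobson_bot] at hx
  rw [Ideal.mem_bot]
  have h1 : x.1 = 0 := by
    by_contra h
    have := (hx (-x.1⁻¹, 0)).map (RingHom.fst F₁ F₂)
    simp [mul_inv_cancel₀ h] at this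
  have h2 : x.2 = 0 := by
    by_contra h
    have := (hx (0, -x.2⁻¹)).map (RingHom.snd F₁ F₂)
    simp [mul_inv_cancel₀ h] at this
  exact Prod.ext h1 h2

lemma classify (F₁ F₂ : Type*) [Field F₁] [Field F₂] (I : Ideal (F₁ × F₂))
    (h1 : I ≠ ⊤) (h2 : I ≠ ⊥) :
    I = Ideal.prod ⊤ ⊥ ∨ I = Ideal.prod ⊥ ⊤ := by
  have hI := Ideal.ideal_prod_eq I
  rcases Ideal.eq_bot_or_top (Ideal.map (RingHom.fst F₁ F₂) I) with ha | ha <;>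
    rcases Ideal.eq_bot_or_top (Ideal.map (RingHom.snd F₁ F₂) I) with hb | hb <;>
    rw [ha, hb] at hI
  · exact absurd (hI.trans (by ext ⟨a,b⟩; simp [Ideal.mem_prod, Prod.ext_iff])) h2
  · exact Or.inr hI
  · exact Or.inl hI
  · exact absurd (hI.trans (by ext ⟨a,b⟩; simp [Ideal.mem_prod])) h1

/-- For `R ≅ F_1 × F_2` a product of two fields, `sdim_M(Γ(R)) = 1`. -/
theorem stmt_13 (F₁ F₂ : Type*) [Field F₁] [Field F₂] :
    sdim (comaxGraph (F₁ × F₂)) = 1 := by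
  classical
  set P₁ : Ideal (F₁ × F₂) := Ideal.prod ⊤ ⊥ with hP₁
  set P₂ : Ideal (F₁ × F₂) := Ideal.prod ⊥ ⊤ with hP₂
  have hmem1 : ((1 : F₁), (0 : F₂)) ∈ P₁ := ⟨trivial, rfl⟩
  have hmem2 : ((0 : F₁), (1 : F₂)) ∈ P₂ := ⟨rfl, trivial⟩
  have hne : P₁ ≠ P₂ := by
    intro h
    have := h ▸ hmem1
    exact one_ne_zero (this.1 : (1 : F₁) ∈ (⊥ : Ideal F₁))
  have hv1 : IsComaxVertex (F₁ × F₂) P₁ := by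
    constructor
    · intro h
      have : ((0 : F₁), (1 : F₂)) ∈ P₁ := h ▸ trivial
      exact one_ne_zero (this.2 : (1 : F₂) ∈ (⊥ : Ideal F₂))
    · rw [jac_bot]
      intro h
      have := h hmem1
      rw [Ideal.mem_bot] at this
      exact one_ne_zero (congrArg Prod.fst this)
  have hv2 : IsComaxVertex (F₁ × F₂) P₂ := by
    constructor
    · intro h
      have : ((1 : F₁), (0 : F₂)) ∈ P₂ := h ▸ trivial
      exact one_ne_zero (this.1 : (1 : F₁) ∈ (⊥ : Ideal F₁))
    · rw [jac_bot]
      intro h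
      have := h hmem2
      rw [Ideal.mem_bot] at this
      exact one_ne_zero (congrArg Prod.snd this)
  set v₁ : {I : Ideal (F₁ × F₂) // IsComaxVertex (F₁ × F₂) I} := ⟨P₁, hv1⟩
  set v₂ : {I : Ideal (F₁ × F₂) // IsComaxVertex (F₁ × F₂) I} := ⟨P₂, hv2⟩
  have hvne : v₁ ≠ v₂ := fun h => hne (congrArg Subtype.val h)
  have hclass : ∀ u : {I : Ideal (F₁ × F₂) // IsComaxVertex (F₁ × F₂) I},
      u = v₁ ∨ u = v₂ := by
    rintro ⟨I, hIt, hIj⟩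
    have hIb : I ≠ ⊥ := by
      intro h
      exact hIj (h.le.trans bot_le)
    rcases classify F₁ F₂ I hIt hIb with h | h
    · exact Or.inl (Subtype.ext h)
    · exact Or.inr (Subtype.ext h)
  set G := comaxGraph (F₁ × F₂)
  have hS : IsStrongResolvingSet G {v₁} := by
    intro u v huv
    refine ⟨v₁, rfl, ?_⟩
    rcases hclass u with hu | hu <;> rcases hclass v with hv | hv
    · exact absurd (hu.trans hv.symm) huv
    · subst hu; subst hv
      right
      rw [SimpleGraph.dist_self, add_zero]
    · subst hu; subst hv
      left
      rw [SimpleGraph.dist_self, add_zero]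
    · exact absurd (hu.trans hv.symm) huv
  have hidx : Nonempty {S : Set _ // IsStrongResolvingSet G S} := ⟨⟨{v₁}, hS⟩⟩
  refine le_antisymm ?_ ?_
  · refine le_trans (ciInf_le (OrderBot.bddBelow _) ⟨{v₁}, hS⟩) ?_
    rw [Cardinal.mk_singleton]
  · refine le_ciInf fun S => ?_
    obtain ⟨w, hw, -⟩ := S.2 v₁ v₂ hvne
    rw [Cardinal.one_le_iff_ne_zero, Cardinal.mk_ne_zero_iff]
    exact ⟨⟨w, hw⟩⟩


end CoMax
end
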